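/- For every real x > 1, the function h(x,·) : (0,∞) → ℝ, y ↦ -y((log y)^2 - 2 log y + 2 - x), attains its maximum over (0,∞) at y = exp(√x), and this maximum value equals 2·exp(√x)·(√x - 1); i.e., for all y > 0, h(x,y) ≤ 2·exp(√x)·(√x - 1). -/

import Mathlib

/-! In the coordinate `t = log y` the function is `-exp t * (t ^ 2 - 2 t + 2 - a ^ 2)` with
`a = √x`. Writing `t = a + u`, the bracket equals `u ^ 2 - 2 (a - 1) (1 - u)`, so the value is at most
`2 (a - 1) exp a * (exp u * (1 - u))`, and `exp u * (1 - u) ≤ 1` is `1 - u ≤ exp (-u)`. -/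

open Real

lemma Real.exp_mul_one_sub_le_one (u : ℝ) : exp u * (1 - u) ≤ 1 :=
  calc exp u * (1 - u) ≤ exp u * exp (-u) :=
        mul_le_mul_of_nonneg_left (one_sub_le_exp_neg u) (exp_pos u).le
    _ = 1 := by rw [← exp_add, add_neg_cancel, exp_zero]

lemma Real.neg_exp_mul_le_of_one_le {a : ℝ} (ha : 1 ≤ a) (t : ℝ) :
    -exp t * (t ^ 2 - 2 * t + 2 - a ^ 2) ≤ 2 * exp a * (a - 1) := by
  obtain ⟨u, rfl⟩ : ∃ u, t = a + u := ⟨t - a, by ring⟩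
  have h_bracket : (a + u) ^ 2 - 2 * (a + u) + 2 - a ^ 2 = u ^ 2 - 2 * (a - 1) * (1 - u) := by ring
  have h_key := exp_mul_one_sub_le_one u
  rw [exp_add, h_bracket]
  nlinarith [mul_nonneg (mul_nonneg (exp_pos a).le (sub_nonneg.2 ha)) (sub_nonneg.2 h_key),
    mul_nonneg (mul_nonneg (exp_pos a).le (exp_pos u).le) (sq_nonneg u)]

theorem h_max (x : ℝ) (hx : 1 < x) :
    (-Real.exp (Real.sqrt x) *
        ((Real.log (Real.exp (Real.sqrt x)))^2 - 2 * Real.log (Real.exp (Real.sqrt x)) + 2 - x)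
      = 2 * Real.exp (Real.sqrt x) * (Real.sqrt x - 1)) ∧
    ∀ y : ℝ, 0 < y →
      -y * ((Real.log y)^2 - 2 * Real.log y + 2 - x)
        ≤ 2 * Real.exp (Real.sqrt x) * (Real.sqrt x - 1) := by
  have hsq : √x ^ 2 = x := sq_sqrt (by linarith)
  refine ⟨by rw [log_exp]; linear_combination (-exp √x) * hsq, fun y hy => ?_⟩
  have h_bound := neg_exp_mul_le_of_one_le (one_le_sqrt.2 hx.le) (log y)
  rwa [exp_log hy, hsq] at h_bound
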